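/- arXiv:2603.12753 — 2 statements merged into one kernel-verified Lean document; each statement's English description precedes it below -/
import Mathlib

section
/- For the Gaussian trade-off function f_μ(α) = Φ(Φ^{-1}(1 - α) - μ) with μ > 0, where Φ is the standard normal CDF, one has f_μ(α) < 1 for all α ∈ (0,1], lim_{α→0⁺} f_μ(α) = 1, and lim_{α→0⁺} (1 - f_μ(α))/α = ∞. Hence the Gaussian mechanism fails gracefully but has unbounded relative disclosure risk. -/
open Set Filter Real

/-- The standard normal cumulative distribution function. -/
noncomputable def stdNormalCDF (t : ℝ) : ℝ :=
  ∫ x in Set.Iic t, (Real.sqrt (2 * Real.pi))⁻¹ * Real.exp (-(x ^ 2) / 2)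

/-!
Write `φ` for the standard Gaussian density and `Q t = 1 - Φ t = ∫_t^∞ φ` for its tail.
Along `α → 0⁺` the point `t = Φ⁻¹(1 - α)` tends to `∞` and `Q t = α`, so
`(1 - f_μ(α)) / α = Q (t - μ) / Q t`. Since `φ ≥ φ t` on `[t - μ, t]`, the numerator is at
least `μ φ(t)`, while the Mills ratio bound `Q t ≤ φ(t) / t` controls the denominator; hence
the quotient is at least `μ t → ∞`.
-/

open MeasureTheory ProbabilityTheory Topology

lemma gaussianPDFReal_zero_one (x : ℝ) :
    gaussianPDFReal 0 1 x = (√(2 * π))⁻¹ * rexp (-x ^ 2 / 2) := by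
  simp [gaussianPDFReal]

lemma gaussianPDFReal_le_of_abs_le (μ : ℝ) (v : NNReal) {x y : ℝ} (h : |x - μ| ≤ |y - μ|) :
    gaussianPDFReal μ v y ≤ gaussianPDFReal μ v x := by
  unfold gaussianPDFReal
  gcongr _ * rexp ?_
  exact div_le_div_of_nonneg_right (neg_le_neg (sq_le_sq.2 h)) (by positivity)

/-- `-x ^ 2 / 2` lies below its tangent line at `t`. -/
lemma gaussianPDFReal_zero_one_le_tangent (t x : ℝ) :
    gaussianPDFReal 0 1 x ≤ gaussianPDFReal 0 1 t * rexp (t ^ 2) * rexp (-t * x) := by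
  simp only [gaussianPDFReal_zero_one, mul_assoc, ← exp_add]
  gcongr
  nlinarith [sq_nonneg (x - t)]

lemma integral_Ioi_gaussianPDFReal_pos (μ : ℝ) {v : NNReal} (hv : v ≠ 0) (t : ℝ) :
    0 < ∫ x in Ioi t, gaussianPDFReal μ v x := by
  rw [setIntegral_pos_iff_support_of_nonneg_ae (ae_of_all _ (gaussianPDFReal_nonneg μ v))
    (integrable_gaussianPDFReal μ v).integrableOn]
  have hsupp : Function.support (gaussianPDFReal μ v) = univ :=
    Function.support_eq_univ fun x => (gaussianPDFReal_pos μ v x hv).ne'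
  simp [hsupp]

lemma antitone_integral_Ioi_gaussianPDFReal (μ : ℝ) (v : NNReal) :
    Antitone fun t => ∫ x in Ioi t, gaussianPDFReal μ v x := fun _ _ hst =>
  setIntegral_mono_set (integrable_gaussianPDFReal μ v).integrableOn
    (ae_of_all _ (gaussianPDFReal_nonneg μ v)) (Ioi_subset_Ioi hst).eventuallyLE

lemma stdNormalCDF_eq_integral (t : ℝ) :
    stdNormalCDF t = ∫ x in Iic t, gaussianPDFReal 0 1 x := by
  simp only [stdNormalCDF, gaussianPDFReal_zero_one]

lemma one_sub_stdNormalCDF (t : ℝ) :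
    1 - stdNormalCDF t = ∫ x in Ioi t, gaussianPDFReal 0 1 x := by
  rw [stdNormalCDF_eq_integral, ← integral_gaussianPDFReal_eq_one 0 one_ne_zero,
    ← intervalIntegral.integral_Iic_add_Ioi (integrable_gaussianPDFReal 0 1).integrableOn
      (integrable_gaussianPDFReal 0 1).integrableOn, add_sub_cancel_left]

lemma stdNormalCDF_lt_one (t : ℝ) : stdNormalCDF t < 1 :=
  sub_pos.1 <| (one_sub_stdNormalCDF t).symm ▸ integral_Ioi_gaussianPDFReal_pos 0 one_ne_zero t

/-- The Mills ratio bound. -/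
lemma integral_Ioi_gaussianPDFReal_le {t : ℝ} (ht : 0 < t) :
    ∫ x in Ioi t, gaussianPDFReal 0 1 x ≤ gaussianPDFReal 0 1 t / t := by
  have hneg : -t < 0 := neg_lt_zero.2 ht
  calc ∫ x in Ioi t, gaussianPDFReal 0 1 x
      ≤ ∫ x in Ioi t, gaussianPDFReal 0 1 t * rexp (t ^ 2) * rexp (-t * x) :=
        setIntegral_mono_on (integrable_gaussianPDFReal 0 1).integrableOn
          ((integrableOn_exp_mul_Ioi hneg t).const_mul _) measurableSet_Ioi
          fun x _ => gaussianPDFReal_zero_one_le_tangent t x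
    _ = gaussianPDFReal 0 1 t / t := by
        rw [integral_const_mul, integral_exp_mul_Ioi hneg, neg_div_neg_eq, ← mul_div_assoc,
          mul_assoc, ← exp_add, neg_mul, ← sq, add_neg_cancel, exp_zero, mul_one]

lemma mul_gaussianPDFReal_le_integral_Ioi_sub {s t : ℝ} (hs : 0 ≤ s) (hst : s ≤ 2 * t) :
    s * gaussianPDFReal 0 1 t ≤ ∫ x in Ioi (t - s), gaussianPDFReal 0 1 x := by
  have hIoc := setIntegral_ge_of_const_le (μ := volume) (c := gaussianPDFReal 0 1 t)
    (measurableSet_Ioc (a := t - s) (b := t)) (by simp [Real.volume_Ioc])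
    (fun x hx => gaussianPDFReal_le_of_abs_le 0 1 <| by
      rw [sub_zero, sub_zero, abs_le, abs_of_nonneg (by linarith [hx.1, hx.2])]
      exact ⟨by linarith [hx.1], hx.2⟩)
    (integrable_gaussianPDFReal 0 1).integrableOn
  rw [measureReal_def, Real.volume_Ioc, sub_sub_cancel, ENNReal.toReal_ofReal hs,
    smul_eq_mul] at hIoc
  exact hIoc.trans <| setIntegral_mono_set (integrable_gaussianPDFReal 0 1).integrableOn
    (ae_of_all _ (gaussianPDFReal_nonneg 0 1)) Ioc_subset_Ioi_self.eventuallyLE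

lemma tendsto_integral_Ioi_sub_div_integral_Ioi {s : ℝ} (hs : 0 < s) :
    Tendsto (fun t => (∫ x in Ioi (t - s), gaussianPDFReal 0 1 x) /
      ∫ x in Ioi t, gaussianPDFReal 0 1 x) atTop atTop := by
  refine tendsto_atTop_mono' atTop ?_ (tendsto_id.const_mul_atTop hs)
  filter_upwards [eventually_ge_atTop s, eventually_gt_atTop 0] with t hst ht
  calc s * t = s * gaussianPDFReal 0 1 t / (gaussianPDFReal 0 1 t / t) := by
        field_simp [(gaussianPDFReal_pos 0 1 t one_ne_zero).ne']
    _ ≤ (∫ x in Ioi (t - s), gaussianPDFReal 0 1 x) / ∫ x in Ioi t, gaussianPDFReal 0 1 x :=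
      div_le_div₀ (integral_Ioi_gaussianPDFReal_pos 0 one_ne_zero (t - s)).le
        (mul_gaussianPDFReal_le_integral_Ioi_sub hs.le (by linarith))
        (integral_Ioi_gaussianPDFReal_pos 0 one_ne_zero t) (integral_Ioi_gaussianPDFReal_le ht)

lemma tendsto_atTop_of_antitone_of_rightInverse {Q G : ℝ → ℝ} (hQ : Antitone Q)
    (hQpos : ∀ t, 0 < Q t) (hQG : ∀ᶠ α in 𝓝[>] 0, Q (G α) = α) :
    Tendsto G (𝓝[>] 0) atTop := by
  refine tendsto_atTop.2 fun M => ?_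
  filter_upwards [hQG, Ioo_mem_nhdsGT (hQpos M)] with α hα hαM
  by_contra! hGM
  linarith [hQ hGM.le, hαM.2]

theorem gaussian_graceful_failure_unbounded_risk_general
    (μ : ℝ) (hμ : 0 < μ)
    (Φinv : ℝ → ℝ)
    (hΦinv : ∀ x ∈ Ioo (0:ℝ) 1, stdNormalCDF (Φinv x) = x) :
    (∀ α ∈ Ioc (0:ℝ) 1, stdNormalCDF (Φinv (1 - α) - μ) < 1) ∧
    Tendsto (fun α => stdNormalCDF (Φinv (1 - α) - μ)) (nhdsWithin 0 (Ioi 0)) (nhds 1) ∧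
    Tendsto (fun α => (1 - stdNormalCDF (Φinv (1 - α) - μ)) / α)
      (nhdsWithin 0 (Ioi 0)) atTop := by
  have htail : ∀ᶠ α in 𝓝[>] 0, ∫ x in Ioi (Φinv (1 - α)), gaussianPDFReal 0 1 x = α := by
    filter_upwards [Ioo_mem_nhdsGT one_pos] with α hα
    rw [← one_sub_stdNormalCDF, hΦinv _ ⟨by linarith [hα.2], by linarith [hα.1]⟩, sub_sub_cancel]
  have hinv : Tendsto (fun α => Φinv (1 - α)) (𝓝[>] 0) atTop :=
    tendsto_atTop_of_antitone_of_rightInverse (antitone_integral_Ioi_gaussianPDFReal 0 1)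
      (integral_Ioi_gaussianPDFReal_pos 0 one_ne_zero) htail
  refine ⟨fun α _ => stdNormalCDF_lt_one _, ?_, ?_⟩
  · have hshift : Tendsto (fun α => Φinv (1 - α) - μ) (𝓝[>] 0) atTop := by
      simpa only [sub_eq_add_neg] using tendsto_atTop_add_const_right _ (-μ) hinv
    have htail_zero := (tendsto_integral_Ioi_zero (μ := volume) (f := gaussianPDFReal 0 1)
      hshift).const_sub 1
    simpa only [← one_sub_stdNormalCDF, sub_sub_cancel, sub_zero] using htail_zero
  · refine ((tendsto_integral_Ioi_sub_div_integral_Ioi hμ).comp hinv).congr' ?_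
    filter_upwards [htail] with α hα
    rw [Function.comp_apply, hα, one_sub_stdNormalCDF]

/-- the Gaussian trade-off function f_μ(α) = Φ(Φ⁻¹(1-α) - μ) satisfies
f_μ(α) < 1 on (0,1], tends to 1 as α → 0⁺, and its relative disclosure risk
(1 - f_μ(α))/α tends to ∞ as α → 0⁺ (graceful failure, unbounded relative risk). -/
theorem gaussian_graceful_failure_unbounded_risk
    (μ : ℝ) (hμ : 0 < μ)
    (Φinv : ℝ → ℝ)
    (hΦinv : ∀ x ∈ Ioo (0:ℝ) 1, stdNormalCDF (Φinv x) = x)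
    (hΦinv' : ∀ t : ℝ, Φinv (stdNormalCDF t) = t) :
    (∀ α ∈ Ioc (0:ℝ) 1, stdNormalCDF (Φinv (1 - α) - μ) < 1) ∧
    Tendsto (fun α => stdNormalCDF (Φinv (1 - α) - μ)) (nhdsWithin 0 (Ioi 0)) (nhds 1) ∧
    Tendsto (fun α => (1 - stdNormalCDF (Φinv (1 - α) - μ)) / α)
      (nhdsWithin 0 (Ioi 0)) atTop :=
  gaussian_graceful_failure_unbounded_risk_general μ hμ Φinv hΦinv
end

section
/- Let f be a trade-off function with f(0) = 1 and bounded relative disclosure risk ρ = sup_{α∈(0,1]} (1 - f(α))/α < ∞. Then for every prior p ∈ (0,1) and every α ∈ (0,1], the posterior satisfies p_post = p(1-f(α))/((1-p)α + p(1-f(α))) ≤ ρp/(1-p+ρp) < 1. In particular no blatant disclosure (posterior = 1) is possible. -/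
open Set

/-- for a trade-off function with f(0) = 1 and bounded relative
disclosure risk ρ, the posterior is at most ρp/(1-p+ρp) < 1; no blatant disclosure. -/
theorem bounded_risk_posterior_bound
    (f : ℝ → ℝ)
    (hconv : ConvexOn ℝ (Icc 0 1) f)
    (hcont : ContinuousOn f (Icc 0 1))
    (hanti : AntitoneOn f (Icc 0 1))
    (hrange : ∀ α ∈ Icc (0:ℝ) 1, f α ∈ Icc (0:ℝ) 1)
    (hle : ∀ α ∈ Icc (0:ℝ) 1, f α ≤ 1 - α)
    (hf0 : f 0 = 1)
    (ρ : ℝ) (hρ : IsLUB ((fun α => (1 - f α) / α) '' Ioc 0 1) ρ) :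
    ∀ p ∈ Ioo (0:ℝ) 1, ∀ α ∈ Ioc (0:ℝ) 1,
      p * (1 - f α) / ((1 - p) * α + p * (1 - f α)) ≤ ρ * p / (1 - p + ρ * p) ∧
      ρ * p / (1 - p + ρ * p) < 1 := by
  intro p hp α hα
  obtain ⟨hp0, hp1⟩ := hp
  obtain ⟨hα0, hα1⟩ := hα
  have hfα1 : f α ≤ 1 := (hrange α ⟨le_of_lt hα0, hα1⟩).2
  have hub : (1 - f α) / α ≤ ρ := hρ.1 ⟨α, ⟨hα0, hα1⟩, rfl⟩
  have h1 : 1 - f α ≤ ρ * α := by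
    rw [div_le_iff₀ hα0] at hub; linarith [mul_comm ρ α]
  have hρ0 : 0 ≤ ρ := by
    have h2 : (1 - f 1) / 1 ≤ ρ := hρ.1 ⟨1, ⟨one_pos, le_refl 1⟩, rfl⟩
    have hf1 : f 1 ≤ 1 := (hrange 1 ⟨zero_le_one, le_refl 1⟩).2
    simp at h2; linarith
  have hden1 : 0 < (1 - p) * α + p * (1 - f α) := by
    have h3 : 0 < (1 - p) * α := mul_pos (by linarith) hα0
    nlinarith
  have hden2 : 0 < 1 - p + ρ * p := by nlinarith
  constructor
  · rw [div_le_div_iff₀ hden1 hden2]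
    nlinarith [mul_pos hp0 (sub_pos.mpr hp1)]
  · rw [div_lt_one hden2]; nlinarith
end
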